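/- arXiv:2103.02695 — 3 statements merged into one kernel-verified Lean document; each statement's English description precedes it below -/
import Mathlib

section
/- Let x1, x2 in R^d and let w be a unit vector in R^d with f_dc(w) >= 0. Then min_s w · x2^s - max_s w · x1^s <= f_dc(w) * (f_dc(x2) - f_dc(x1)), where the min and max are over all circular shifts s. In particular, if f_dc(x2) >= f_dc(x1), this is at most f_dc(x2) - f_dc(x1). -/
open Matrix

/-- Circular shift of a vector in `ℝ^d` by `s` positions. -/
def shift {d : ℕ} (x : Fin d → ℝ) (s : Fin d) : Fin d → ℝ := fun i => x (i + s)

/-- The DC component of a signal: `f_dc x = (1/√d) ∑ i, x i`. -/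
noncomputable def fdc {d : ℕ} (x : Fin d → ℝ) : ℝ := (1 / Real.sqrt d) * ∑ i : Fin d, x i

lemma sum_dot_shift {d : ℕ} [NeZero d] (w x : Fin d → ℝ) :
    ∑ s : Fin d, w ⬝ᵥ shift x s = (∑ i : Fin d, w i) * (∑ i : Fin d, x i) := by
  simp only [dotProduct, shift]
  rw [Finset.sum_comm, Finset.sum_mul]
  refine Finset.sum_congr rfl fun i _ => ?_
  rw [Finset.mul_sum]
  exact Fintype.sum_equiv (Equiv.addLeft i) _ _ (fun s => rfl)

/-- For a unit vector `w` with nonnegative DC component, the shift-invariant margin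
`min_s w·x2ˢ − max_s w·x1ˢ` is at most `f_dc(w) (f_dc(x2) − f_dc(x1))`, and if
`f_dc(x2) ≥ f_dc(x1)` this is at most `f_dc(x2) − f_dc(x1)`. -/
theorem margin_le_fdc_gap {d : ℕ} (hd : 0 < d) (w x1 x2 : Fin d → ℝ)
    (hw : ∑ i : Fin d, w i ^ 2 = 1) (hwdc : 0 ≤ fdc w)
    (hne : (Finset.univ : Finset (Fin d)).Nonempty) :
    Finset.univ.inf' hne (fun s : Fin d => w ⬝ᵥ shift x2 s) -
        Finset.univ.sup' hne (fun s : Fin d => w ⬝ᵥ shift x1 s) ≤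
      fdc w * (fdc x2 - fdc x1) ∧
    (fdc x1 ≤ fdc x2 →
      Finset.univ.inf' hne (fun s : Fin d => w ⬝ᵥ shift x2 s) -
          Finset.univ.sup' hne (fun s : Fin d => w ⬝ᵥ shift x1 s) ≤
        fdc x2 - fdc x1) := by
  haveI : NeZero d := ⟨hd.ne'⟩
  have hdpos : (0:ℝ) < d := by exact_mod_cast hd
  have hsqrt : (0:ℝ) < Real.sqrt d := Real.sqrt_pos.mpr hdpos
  have hsq : Real.sqrt d * Real.sqrt d = d := Real.mul_self_sqrt hdpos.le
  -- key identity: average of w ⬝ shift x s equals fdc w * fdc x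
  have key : ∀ x : Fin d → ℝ,
      (∑ s : Fin d, w ⬝ᵥ shift x s) = (d : ℝ) * (fdc w * fdc x) := by
    intro x
    rw [sum_dot_shift]
    unfold fdc
    field_simp
    rw [Real.sq_sqrt hdpos.le]
  -- min ≤ average
  have hmin : (d:ℝ) * Finset.univ.inf' hne (fun s : Fin d => w ⬝ᵥ shift x2 s)
      ≤ ∑ s : Fin d, w ⬝ᵥ shift x2 s := by
    calc (d:ℝ) * Finset.univ.inf' hne (fun s : Fin d => w ⬝ᵥ shift x2 s)
        = ∑ _s : Fin d, Finset.univ.inf' hne (fun s : Fin d => w ⬝ᵥ shift x2 s) := by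
          simp [Finset.sum_const, nsmul_eq_mul]
      _ ≤ _ := Finset.sum_le_sum fun s _ => Finset.inf'_le _ (Finset.mem_univ s)
  have hmax : (∑ s : Fin d, w ⬝ᵥ shift x1 s)
      ≤ (d:ℝ) * Finset.univ.sup' hne (fun s : Fin d => w ⬝ᵥ shift x1 s) := by
    calc (∑ s : Fin d, w ⬝ᵥ shift x1 s)
        ≤ ∑ _s : Fin d, Finset.univ.sup' hne (fun s : Fin d => w ⬝ᵥ shift x1 s) :=
          Finset.sum_le_sum fun s _ => Finset.le_sup' (fun s : Fin d => w ⬝ᵥ shift x1 s) (Finset.mem_univ s)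
      _ = _ := by simp [Finset.sum_const, nsmul_eq_mul]
  have hmain : Finset.univ.inf' hne (fun s : Fin d => w ⬝ᵥ shift x2 s) -
      Finset.univ.sup' hne (fun s : Fin d => w ⬝ᵥ shift x1 s) ≤
      fdc w * (fdc x2 - fdc x1) := by
    have h2 := hmin.trans (le_of_eq (key x2))
    have h1 := (le_of_eq (key x1).symm).trans hmax
    have : (d:ℝ) * (Finset.univ.inf' hne (fun s : Fin d => w ⬝ᵥ shift x2 s) -
        Finset.univ.sup' hne (fun s : Fin d => w ⬝ᵥ shift x1 s)) ≤
        (d:ℝ) * (fdc w * (fdc x2 - fdc x1)) := by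
      have := sub_le_sub h2 h1
      nlinarith [this]
    exact le_of_mul_le_mul_left (by linarith [this]) hdpos
  refine ⟨hmain, fun hgap => hmain.trans ?_⟩
  -- fdc w ≤ 1
  have hcs : (∑ i : Fin d, w i) ^ 2 ≤ (d:ℝ) * ∑ i : Fin d, w i ^ 2 := by
    have h := sq_sum_le_card_mul_sum_sq (s := (Finset.univ : Finset (Fin d))) (f := w)
    simpa using h
  have hfw : fdc w ≤ 1 := by
    unfold fdc
    rw [div_mul_eq_mul_div, one_mul, div_le_one hsqrt]
    nlinarith [Real.sq_sqrt hdpos.le, hcs, hw, hsqrt]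
  nlinarith [hwdc, hfw, sub_nonneg.mpr hgap]
end

section
/- Let X1, X2 be finite nonempty sets of vectors in R^d, and let S1, S2 be the sets of all circular shifts of elements of X1, X2 respectively. If there exist a vector w with f_dc(w) > 0 and threshold T such that w · z < T for all z in S1 and w · z > T for all z in S2, then max over x1 in X1 of f_dc(x1) < min over x2 in X2 of f_dc(x2). -/
open Matrix

lemma sum_shift_dot {d : ℕ} [NeZero d] (w x : Fin d → ℝ) :
    ∑ s : Fin d, w ⬝ᵥ shift x s = (∑ i : Fin d, w i) * (∑ j : Fin d, x j) := by
  simp only [dotProduct, shift]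
  rw [Finset.sum_comm, Finset.sum_mul]
  refine Finset.sum_congr rfl fun i _ => ?_
  rw [← Finset.mul_sum]
  congr 1
  exact Fintype.sum_bijective (fun s => i + s) (Equiv.addLeft i).bijective _ _ (fun s => rfl)

/-- If some direction `w` with positive DC component linearly separates all circular
shifts of `X1` from all circular shifts of `X2` (with threshold `T`), then the DC
components of `X1` are separated from those of `X2`. -/
theorem dc_separable_of_shift_separable {d : ℕ} (hd : 0 < d)
    (X1 X2 : Finset (Fin d → ℝ)) (h1 : X1.Nonempty) (h2 : X2.Nonempty)
    (w : Fin d → ℝ) (T : ℝ) (hwdc : 0 < fdc w)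
    (hsep1 : ∀ x ∈ X1, ∀ s : Fin d, w ⬝ᵥ shift x s < T)
    (hsep2 : ∀ x ∈ X2, ∀ s : Fin d, T < w ⬝ᵥ shift x s) :
    X1.sup' h1 fdc < X2.inf' h2 fdc := by
  have hsd : 0 < Real.sqrt d := Real.sqrt_pos.2 (by exact_mod_cast hd)
  haveI : NeZero d := ⟨hd.ne'⟩
  have hW : 0 < ∑ i : Fin d, w i := by
    have h := hwdc
    unfold fdc at h
    by_contra hc
    push_neg at hc
    nlinarith [one_div_pos.2 hsd]
  rw [Finset.sup'_lt_iff]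
  intro x1 hx1
  rw [Finset.lt_inf'_iff]
  intro x2 hx2
  have hlt1 : (∑ i : Fin d, w i) * (∑ j, x1 j) < d * T := by
    calc (∑ i : Fin d, w i) * (∑ j, x1 j) = ∑ s : Fin d, w ⬝ᵥ shift x1 s :=
          (sum_shift_dot w x1).symm
      _ < ∑ _s : Fin d, T := Finset.sum_lt_sum_of_nonempty (Finset.univ_nonempty_iff.2
            ⟨⟨0, hd⟩⟩) (fun s _ => hsep1 x1 hx1 s)
      _ = d * T := by simp [mul_comm]
  have hlt2 : (d : ℝ) * T < (∑ i : Fin d, w i) * (∑ j, x2 j) := by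
    calc (d : ℝ) * T = ∑ _s : Fin d, T := by simp [mul_comm]
      _ < ∑ s : Fin d, w ⬝ᵥ shift x2 s := Finset.sum_lt_sum_of_nonempty
            (Finset.univ_nonempty_iff.2 ⟨⟨0, hd⟩⟩) (fun s _ => hsep2 x2 hx2 s)
      _ = _ := sum_shift_dot w x2
  have hsum : (∑ j, x1 j) < (∑ j, x2 j) := by
    have := lt_trans hlt1 hlt2
    exact lt_of_mul_lt_mul_left (by linarith) hW.le
  unfold fdc
  have : (0:ℝ) < 1 / Real.sqrt d := by positivity
  nlinarith
end

section
/- Let x in R^d be nonzero and consider the two-layer bias-free NTK kernel regression with training data {(x, +1), (-x, -1)}. The minimum-norm interpolant is g_k(z) = (z·x)/(x·x), so g_k(z) >= 0 if and only if z·x >= 0; i.e., the decision boundary is the hyperplane with normal x. -/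
open Matrix

/-- Euclidean norm of a vector in `ℝ^d`. -/
noncomputable def nrm {d : ℕ} (x : Fin d → ℝ) : ℝ := Real.sqrt (x ⬝ᵥ x)

/-- Angle between two vectors in `ℝ^d`. -/
noncomputable def angle {d : ℕ} (z x : Fin d → ℝ) : ℝ :=
  Real.arccos ((z ⬝ᵥ x) / (nrm z * nrm x))

/-- The NTK of a bias-free two-layer ReLU fully connected network. -/
noncomputable def ntk {d : ℕ} (z x : Fin d → ℝ) : ℝ :=
  (1 / Real.pi) *
    (2 * (z ⬝ᵥ x) * (Real.pi - angle z x) + nrm z * nrm x * Real.sin (angle z x))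

lemma nrm_neg {d : ℕ} (x : Fin d → ℝ) : nrm (-x) = nrm x := by simp [nrm]

lemma angle_neg_right {d : ℕ} (z x : Fin d → ℝ) :
    angle z (-x) = Real.pi - angle z x := by
  simp [angle, nrm_neg, neg_div, Real.arccos_neg]

lemma ntk_sub {d : ℕ} (z x : Fin d → ℝ) :
    ntk z x - ntk z (-x) = 2 * (z ⬝ᵥ x) := by
  have hπ := Real.pi_ne_zero
  simp only [ntk, angle_neg_right, nrm_neg, dotProduct_neg, Real.sin_pi_sub]
  field_simp
  ring

/-- For NTK regression with training data `{(x,+1), (−x,−1)}`, the minimum-norm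
interpolant is `g(z) = (z·x)/(x·x)`, so `g(z) ≥ 0` iff `z·x ≥ 0`: the decision
boundary is the hyperplane with normal `x`. -/
theorem ntk_interpolant_antipodal {d : ℕ} (x : Fin d → ℝ) (hx : x ≠ 0) :
    ∀ z : Fin d → ℝ,
      (Matrix.vecMul ![ntk z x, ntk z (-x)]
            (!![ntk x x, ntk x (-x); ntk (-x) x, ntk (-x) (-x)] :
              Matrix (Fin 2) (Fin 2) ℝ)⁻¹) ⬝ᵥ ![1, -1] = (z ⬝ᵥ x) / (x ⬝ᵥ x) ∧
      (0 ≤ (Matrix.vecMul ![ntk z x, ntk z (-x)]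
            (!![ntk x x, ntk x (-x); ntk (-x) x, ntk (-x) (-x)] :
              Matrix (Fin 2) (Fin 2) ℝ)⁻¹) ⬝ᵥ ![1, -1] ↔ 0 ≤ z ⬝ᵥ x) := by
  intro z
  have hc : 0 < x ⬝ᵥ x := by
    have h0 : 0 ≤ x ⬝ᵥ x := Finset.sum_nonneg fun i _ => mul_self_nonneg _
    rcases h0.lt_or_eq with h | h
    · exact h
    · exact absurd ((dotProduct_self_eq_zero).mp h.symm) hx
  set c := x ⬝ᵥ x with hcdef
  have hπ := Real.pi_ne_zero
  have hsq : nrm x * nrm x = c := Real.mul_self_sqrt hc.le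
  have hangxx : angle x x = 0 := by
    rw [angle, hsq, ← hcdef, div_self hc.ne', Real.arccos_one]
  have h1 : ntk x x = 2 * c := by
    rw [ntk, hangxx, hsq]
    field_simp
    simp only [← hcdef, Real.sin_zero, sub_zero, mul_zero, add_zero]
    ring
  have h2 : ntk x (-x) = 0 := by
    rw [ntk, angle_neg_right, hangxx, nrm_neg]
    simp
  have h3 : ntk (-x) x = 0 := by
    have := ntk_sub (-x) x
    have h2' := h2
    rw [ntk_sub] at *
    -- fallback direct computation
    rw [ntk]
    have : angle (-x) x = Real.pi := by
      rw [angle, nrm_neg, hsq, neg_dotProduct, ← hcdef, neg_div,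
        div_self hc.ne', Real.arccos_neg, Real.arccos_one]
      ring
    rw [this]
    simp
  have h4 : ntk (-x) (-x) = 2 * c := by
    rw [ntk]
    have : angle (-x) (-x) = 0 := by
      rw [angle, nrm_neg, hsq, neg_dotProduct, dotProduct_neg,
        neg_neg, ← hcdef, div_self hc.ne', Real.arccos_one]
    rw [this, nrm_neg, hsq]
    field_simp
    simp only [neg_dotProduct, dotProduct_neg, neg_neg, ← hcdef, Real.sin_zero, sub_zero,
      mul_zero, add_zero]
    ring
  have hM : (!![ntk x x, ntk x (-x); ntk (-x) x, ntk (-x) (-x)] :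
      Matrix (Fin 2) (Fin 2) ℝ) = !![2*c, 0; 0, 2*c] := by
    rw [h1, h2, h3, h4]
  have hinv : (!![2*c, 0; 0, 2*c] : Matrix (Fin 2) (Fin 2) ℝ)⁻¹ =
      !![(2*c)⁻¹, 0; 0, (2*c)⁻¹] := by
    apply Matrix.inv_eq_right_inv
    ext i j
    fin_cases i <;> fin_cases j <;>
      simp [Matrix.mul_apply, Fin.sum_univ_two] <;>
      field_simp <;> ring
  have key := ntk_sub z x
  have hE : (Matrix.vecMul ![ntk z x, ntk z (-x)]
        (!![ntk x x, ntk x (-x); ntk (-x) x, ntk (-x) (-x)] :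
          Matrix (Fin 2) (Fin 2) ℝ)⁻¹) ⬝ᵥ ![1, -1] = (z ⬝ᵥ x) / c := by
    rw [hM, hinv]
    simp only [Matrix.vecMul, dotProduct, Fin.sum_univ_two, Matrix.of_apply,
      Matrix.cons_val_zero, Matrix.cons_val_one, Matrix.head_cons,
      Matrix.cons_val', Matrix.empty_val', Matrix.cons_val_fin_one,
      Matrix.head_fin_const]
    simp only [dotProduct] at key
    have hzx : ntk z (-x) = ntk z x - 2 * ∑ i, z i * x i := by linarith
    rw [hzx]
    field_simp
    ring
  refine ⟨hE, ?_⟩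
  rw [hE, div_nonneg_iff]
  constructor
  · rintro (⟨h, _⟩ | ⟨h, h2⟩)
    · exact h
    · linarith
  · intro h
    exact Or.inl ⟨h, hc.le⟩
end
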